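/- Let tau be a term in the language of the algebra A (built from variables, the n-ary symbol f, the unary symbol u, and the unary symbols u_{pqr}). If there are tuples p and q with tau^A(p) ≠ tau^A(q) and both tau^A(p) and tau^A(q) lie in C = {a_1, ..., a_n, b_1, ..., b_n}, then tau^A is, as an operation, equal to (u^A)^m composed with a coordinate projection for some m in omega (where (u^A)^0 is the identity). -/
import Mathlib


/- Common formalization of the construction from
   "On the Descending Central Series of Higher Commutators for Simple Algebras".
   We fix `n = m + 2` (so `n ≥ 2` automatically). -/

namespace Paper

/-- The universe of the algebra `A`: generators `a i j`, `b i j`, the elements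
`d k` (here 0-indexed, `d k` is the paper's `d_{k+1}`), the element `c`, and
formal pairs `(x, s)` created at the successive stages of the construction. -/
inductive Uni (m : ℕ) : Type
  | a (i : Fin (m + 2)) (j : ℕ) : Uni m
  | b (i : Fin (m + 2)) (j : ℕ) : Uni m
  | d (k : ℕ) : Uni m
  | c : Uni m
  | pair (x : Fin (m + 2) → Uni m) (s : ℕ) : Uni m

variable {m : ℕ}

/-- membership in `B = { a_{i,j}, b_{i,j} }`. -/
def inB : Uni m → Prop
  | .a _ _ => True
  | .b _ _ => True
  | _ => False

/-- membership in `C = { a_1, …, a_n, b_1, …, b_n }` (`a_i = a_{i,0}`). -/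
def inC : Uni m → Prop
  | .a _ 0 => True
  | .b _ 0 => True
  | _ => False

/-- the binary digit used to encode a tuple in the base domain. -/
def bitOf : Uni m → ℕ
  | .b _ _ => 1
  | _ => 0

/-- The base domain `D₀ = { (x_1,…,x_n) : x_i ∈ {a_i, b_i} }`. -/
def D0 : Set (Fin (m + 2) → Uni m) := {x | ∀ i, x i = .a i 0 ∨ x i = .b i 0}

/-- the binary code of the first `n - 1` coordinates of a tuple. -/
def code (x : Fin (m + 2) → Uni m) : ℕ :=
  ∑ i : Fin (m + 2), if i.val < m + 1 then bitOf (x i) * 2 ^ i.val else 0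

/-- the stage at which an element appears (`A₀` elements at stage 0). -/
def stage : Uni m → ℕ
  | .pair _ s => s + 1
  | _ => 0

/-- the stage at which a tuple first lies in `A_i^n`. -/
def stageTup (x : Fin (m + 2) → Uni m) : ℕ := Finset.univ.sup fun i => stage (x i)

open Classical in
/-- The `n`-ary basic operation `f^A`.  On `D₀` it takes the values
`d_1, …, d_{2^{n-1}+1}` (0-indexed here) as in the paper: the tuple with
binary code `j-1` on its first `n-1` coordinates goes to `d_j`, except that the
all-`b` tuple goes to `d_{2^{n-1}+1}`.  Off `D₀` it is the canonical injection
into formal pairs, tagged by the stage. -/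
noncomputable def fA (x : Fin (m + 2) → Uni m) : Uni m :=
  if x ∈ D0 then
    if code x = 2 ^ (m + 1) - 1 ∧ bitOf (x ⟨m + 1, by omega⟩) = 1 then .d (2 ^ (m + 1))
    else .d (code x)
  else .pair x (stageTup x)

/-- The permutation `u^A = (a_1 b_1 a_2 b_2 … a_n b_n c)`. -/
def uA : Uni m → Uni m
  | .a i 0 => .b i 0
  | .b i 0 => if h : i.val + 1 < m + 2 then .a ⟨i.val + 1, h⟩ 0 else .c
  | .c => .a ⟨0, by omega⟩ 0
  | x => x

open Classical in
/-- The unary operation `u_{pqr}`: a 3-cycle on `p, q, r`, shifting the second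
index on `B`, the identity elsewhere. -/
noncomputable def upqr (p q r : Uni m) (x : Uni m) : Uni m :=
  if x = p then q
  else if x = q then r
  else if x = r then p
  else match x with
    | .a i j => .a i (j + 1)
    | .b i j => .b i (j + 1)
    | y => y

/-- `(p, q, r)` is a legitimate index triple for `u_{pqr}`: pairwise distinct
elements of `A \ B`. -/
def OkTriple (p q r : Uni m) : Prop :=
  p ≠ q ∧ q ≠ r ∧ p ≠ r ∧ ¬ inB p ∧ ¬ inB q ∧ ¬ inB r

/-- Terms in the language of `A` in `k` variables. -/
inductive Tm (m k : ℕ) : Type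
  | var (v : Fin k) : Tm m k
  | f (args : Fin (m + 2) → Tm m k) : Tm m k
  | u (t : Tm m k) : Tm m k
  | upqr (p q r : Uni m) (t : Tm m k) : Tm m k

/-- A term is well formed when every `u_{pqr}` symbol occurring in it is indexed
by a legitimate triple. -/
def TmOk {k : ℕ} : Tm m k → Prop
  | .var _ => True
  | .f args => ∀ i, TmOk (args i)
  | .u t => TmOk t
  | .upqr p q r t => OkTriple p q r ∧ TmOk t

/-- Interpretation of a term as a term operation of `A`. -/
noncomputable def eval {k : ℕ} : Tm m k → (Fin k → Uni m) → Uni m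
  | .var v, x => x v
  | .f args, x => fA fun i => eval (args i) x
  | .u t, x => uA (eval t x)
  | .upqr p q r t, x => upqr p q r (eval t x)

/-- The `k`-term cube of an operation `t` on pairs `(p_i, q_i)`: vertex `l`
(0-indexed, `l` is the paper's `i - 1`) evaluates `t` on the tuple choosing
`q i` in coordinate `i` exactly when the corresponding binary digit of `l` is
`1` (coordinate `0` corresponds to the most significant digit, so the pairs
`(2j-1, 2j)` of the paper are the vertices `(2j-2, 2j-1)` here, differing in
the last coordinate). -/
def cube {α : Type*} (k : ℕ) (t : (Fin k → α) → α) (p q : Fin k → α) (l : ℕ) : α :=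
  t fun i => if l / 2 ^ (k - 1 - i.val) % 2 = 1 then q i else p i

/-- The `k`-term cube of a `K`-ary term operation whose variables are grouped
into `k` blocks by `β` (the paper's tuples `𝐱_1, …, 𝐱_k`), on tuples
`(𝐩_i, 𝐪_i)` encoded by `p q : Fin K → α`. -/
def blockCube {α : Type*} {K : ℕ} (k : ℕ) (t : (Fin K → α) → α)
    (β : Fin K → Fin k) (p q : Fin K → α) (l : ℕ) : α :=
  t fun v => if l / 2 ^ (k - 1 - (β v).val) % 2 = 1 then q v else p v


/-- The cycle support of `uA`: `C ∪ {c}`. -/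
def inC' {m : ℕ} (x : Uni m) : Prop := inC x ∨ x = .c

lemma inC'_cases {m : ℕ} {x : Uni m} (h : inC' x) :
    (∃ i, x = .a i 0) ∨ (∃ i, x = .b i 0) ∨ x = .c := by
  rcases h with h | h
  · cases x with
    | a i j => cases j with
      | zero => exact Or.inl ⟨i, rfl⟩
      | succ j => exact absurd h (by simp [inC])
    | b i j => cases j with
      | zero => exact Or.inr (Or.inl ⟨i, rfl⟩)
      | succ j => exact absurd h (by simp [inC])
    | d k => exact absurd h (by simp [inC])
    | c => exact absurd h (by simp [inC])
    | pair x s => exact absurd h (by simp [inC])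
  · exact Or.inr (Or.inr h)

lemma uA_fix {m : ℕ} {x : Uni m} (h : ¬ inC' x) : uA x = x := by
  cases x with
  | a i j =>
    cases j with
    | zero => exact absurd (Or.inl trivial) h
    | succ j => rfl
  | b i j =>
    cases j with
    | zero => exact absurd (Or.inl trivial) h
    | succ j => rfl
  | d k => rfl
  | c => exact absurd (Or.inr rfl) h
  | pair x s => rfl

lemma inC'_of_uA {m : ℕ} {x : Uni m} (h : inC' (uA x)) : inC' x := by
  by_cases hx : inC' x
  · exact hx
  · rw [uA_fix hx] at h; exact h

lemma uA_injC' {m : ℕ} {x y : Uni m} (hx : inC' x) (hy : inC' y)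
    (h : uA x = uA y) : x = y := by
  rcases inC'_cases hx with ⟨i, rfl⟩ | ⟨i, rfl⟩ | rfl <;>
    rcases inC'_cases hy with ⟨i', rfl⟩ | ⟨i', rfl⟩ | rfl <;>
    simp only [uA] at h
  · cases h; rfl
  · split_ifs at h <;> simp at h
  · simp at h
  · split_ifs at h <;> simp at h
  · have hlt := i.isLt; have hlt' := i'.isLt
    split_ifs at h with ha hb hb <;>
    first
    | (simp only [Uni.a.injEq, Fin.mk.injEq] at h
       have : i = i' := Fin.ext (by omega)
       rw [this])
    | (have : i = i' := Fin.ext (by omega)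
       rw [this])
    | simp at h
  · split_ifs at h with ha
    all_goals simp only [Uni.a.injEq, Fin.mk.injEq] at h; omega
  · simp at h
  · split_ifs at h with ha
    all_goals simp only [Uni.a.injEq, Fin.mk.injEq] at h; omega
  · rfl

lemma fA_not_inC' {m : ℕ} (x : Fin (m + 2) → Uni m) : ¬ inC' (fA x) := by
  unfold fA
  split_ifs <;> rintro (h | h) <;> simp_all [inC]

lemma upqr_inC' {m : ℕ} {p q r : Uni m} (hok : OkTriple p q r) (x : Uni m)
    (h : inC' (upqr p q r x)) : upqr p q r x = .c := by
  obtain ⟨-, -, -, hp, hq, hr⟩ := hok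
  unfold upqr at h ⊢
  split_ifs at h ⊢ with h1 h2 h3
  · rcases h with h | h
    · exact absurd h (by cases q <;> simp_all [inC, inB])
    · exact h
  · rcases h with h | h
    · exact absurd h (by cases r <;> simp_all [inC, inB])
    · exact h
  · rcases h with h | h
    · exact absurd h (by cases p <;> simp_all [inC, inB])
    · exact h
  · cases x <;> rcases h with h | h <;> simp_all [inC]

lemma key {m k : ℕ} (τ : Tm m k) (hok : TmOk τ) :
    ∀ p q : Fin k → Uni m, eval τ p ≠ eval τ q →
      inC' (eval τ p) → inC' (eval τ q) →
      ∃ (i : Fin k) (mm : ℕ), ∀ x : Fin k → Uni m, eval τ x = uA^[mm] (x i) := by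
  induction τ with
  | var v =>
    intro p q _ _ _
    exact ⟨v, 0, fun x => rfl⟩
  | f args ih =>
    intro p q _ hp _
    exact absurd hp (fA_not_inC' _)
  | u t ih =>
    intro p q hne hp hq
    have hp' : inC' (eval t p) := inC'_of_uA hp
    have hq' : inC' (eval t q) := inC'_of_uA hq
    have hne' : eval t p ≠ eval t q := fun h => hne (by simp [eval, h])
    obtain ⟨i, mm, h⟩ := ih hok p q hne' hp' hq'
    exact ⟨i, mm + 1, fun x => by
      simp only [eval, h x, Function.iterate_succ_apply']⟩
  | upqr p' q' r' t ih =>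
    intro p q hne hp hq
    have h1 := upqr_inC' hok.1 _ hp
    have h2 := upqr_inC' hok.1 _ hq
    exact absurd (h1.trans h2.symm) hne

/-- Lemma `termnotequal`: if a term `τ` of `A` takes two
distinct values in `C` (on inputs `p`, `q`), then `τ^A` is `(u^A)^m`
composed with a coordinate projection for some `m ∈ ω`. -/
theorem stmt9 {m k : ℕ} (τ : Tm m k) (hok : TmOk τ)
    (p q : Fin k → Uni m) (hne : eval τ p ≠ eval τ q)
    (hp : inC (eval τ p)) (hq : inC (eval τ q)) :
    ∃ (i : Fin k) (mm : ℕ), ∀ x : Fin k → Uni m, eval τ x = uA^[mm] (x i) :=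
  key τ hok p q hne (Or.inl hp) (Or.inl hq)

end Paper
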